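/- Let K be a field and E a finite-dimensional K-vector space with a fixed basis (x_1, …, x_n). Let N ≥ 1 and r ≥ 1 be integers, and let R be a subspace of E^⊗N spanned by a set of monomials, i.e. by elementary tensors of the form x_{i_1} ⊗ x_{i_2} ⊗ … ⊗ x_{i_N} with each x_{i_k} a basis vector. If R ⊗ E^⊗r = E^⊗r ⊗ R as subspaces of E^⊗(N+r) (under the canonical associativity identifications), then R = 0 or R = E^⊗N. -/

import Mathlib

open TensorProduct

variable (K : Type*) [Field K] (E : Type*) [AddCommGroup E] [Module K E]

/-- The subspace `R ⊗ E^⊗r` of `E^⊗(N+r)`: the image of the canonical map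
`R ⊗ E^⊗r → E^⊗N ⊗ E^⊗r ≅ E^⊗(N+r)` induced by the inclusion of `R`. -/
noncomputable def subRight {N : ℕ} (R : Submodule K (⨂[K]^N E)) (r : ℕ) :
    Submodule K (⨂[K]^(N + r) E) :=
  LinearMap.range ((TensorPower.mulEquiv (n := N) (m := r)).toLinearMap
    ∘ₗ LinearMap.rTensor (⨂[K]^r E) R.subtype)

/-- The subspace `E^⊗r ⊗ R` of `E^⊗(N+r)`: the image of the canonical map
`E^⊗r ⊗ R → E^⊗r ⊗ E^⊗N ≅ E^⊗(r+N) ≅ E^⊗(N+r)` induced by the inclusion of `R`. -/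
noncomputable def subLeft {N : ℕ} (R : Submodule K (⨂[K]^N E)) (r : ℕ) :
    Submodule K (⨂[K]^(N + r) E) :=
  LinearMap.range ((TensorPower.cast K E (add_comm r N)).toLinearMap
    ∘ₗ (TensorPower.mulEquiv (n := r) (m := N)).toLinearMap
    ∘ₗ LinearMap.lTensor (⨂[K]^r E) R.subtype)

section Aux
open PiTensorProduct

lemma mulEquiv_tprod {p q : ℕ} (a : Fin p → E) (c : Fin q → E) :
    TensorPower.mulEquiv (R := K) (n := p) (m := q)
        (PiTensorProduct.tprod K a ⊗ₜ[K] PiTensorProduct.tprod K c)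
      = PiTensorProduct.tprod K (Fin.append a c) := by
  rw [← TensorPower.gMul_def]
  exact TensorPower.tprod_mul_tprod K a c

lemma append_apply {α : Type*} {p q : ℕ} (a : Fin p → α) (c : Fin q → α) (j : Fin (p + q)) :
    Fin.append a c j = if h : (j : ℕ) < p then a ⟨j, h⟩ else c ⟨(j : ℕ) - p, by omega⟩ := by
  induction j using Fin.addCases with
  | left i => simp [Fin.append_left]
  | right i =>
      rw [Fin.append_right]
      simp only [Fin.coe_natAdd]
      rw [dif_neg (by omega)]
      congr 1
      ext
      simp

def snocEquiv (n m : ℕ) : ((Fin m → Fin n) × Fin n) ≃ (Fin (m + 1) → Fin n) where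
  toFun := fun p => Fin.snoc p.1 p.2
  invFun := fun u => (Fin.init u, u (Fin.last m))
  left_inv := fun p => by simp
  right_inv := fun u => by simp

@[simp] lemma snocEquiv_symm_apply (n m : ℕ) (u : Fin (m + 1) → Fin n) :
    (snocEquiv n m).symm u = (Fin.init u, u (Fin.last m)) := rfl

noncomputable def powBasis (n : ℕ) (b : Module.Basis (Fin n) K E) :
    (m : ℕ) → Module.Basis (Fin m → Fin n) K (⨂[K]^m E)
  | 0 => (Module.Basis.singleton (Fin 0 → Fin n) K).map (PiTensorProduct.isEmptyEquiv (Fin 0)).symm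
  | (m + 1) =>
      (((powBasis n b m).tensorProduct b).map
        (((TensorProduct.congr (LinearEquiv.refl K (⨂[K]^m E))
            (PiTensorProduct.subsingletonEquiv (0 : Fin 1)).symm)).trans
          (TensorPower.mulEquiv (R := K) (n := m) (m := 1)))).reindex (snocEquiv n m)

theorem powBasis_apply (n : ℕ) (b : Module.Basis (Fin n) K E) :
    ∀ (m : ℕ) (d : Fin m → Fin n),
      powBasis K E n b m d = PiTensorProduct.tprod K (fun k => b (d k))
  | 0, d => by
      rw [powBasis, Module.Basis.map_apply, Module.Basis.singleton_apply,
        LinearEquiv.symm_apply_eq, PiTensorProduct.isEmptyEquiv_apply_tprod]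
  | (m + 1), d => by
      rw [powBasis, Module.Basis.reindex_apply, Module.Basis.map_apply, Module.Basis.tensorProduct_apply']
      simp only [LinearEquiv.trans_apply, TensorProduct.congr_tmul, LinearEquiv.refl_apply,
        snocEquiv_symm_apply]
      rw [powBasis_apply n b m]
      have h1 : ∀ x : E, (PiTensorProduct.subsingletonEquiv (0 : Fin 1)).symm x
          = PiTensorProduct.tprod K (fun _ : Fin 1 => x) := fun x => by
        rw [LinearEquiv.symm_apply_eq, PiTensorProduct.subsingletonEquiv_apply_tprod]
      rw [h1, mulEquiv_tprod]
      congr 1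
      funext j
      rw [append_apply]
      split_ifs with hj
      · show b (Fin.init d ⟨(j : ℕ), hj⟩) = b (d j)
        congr 1
      · show b (d (Fin.last m)) = b (d j)
        congr 1
        have hj' : (j : ℕ) = m := by have := j.isLt; omega
        have : Fin.last m = j := by ext; rw [Fin.val_last, hj']
        rw [this]

lemma tmul_mem_span {M N : Type*} [AddCommGroup M] [AddCommGroup N] [Module K M] [Module K N]
    {S : Set M} {T : Set N} {x : M} {y : N}
    (hx : x ∈ Submodule.span K S) (hy : y ∈ Submodule.span K T) :
    x ⊗ₜ[K] y ∈ Submodule.span K (Set.image2 (· ⊗ₜ[K] ·) S T) := by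
  induction hx using Submodule.span_induction with
  | mem x hxS =>
      induction hy using Submodule.span_induction with
      | mem y hyT => exact Submodule.subset_span (Set.mem_image2_of_mem hxS hyT)
      | zero => rw [tmul_zero]; exact Submodule.zero_mem _
      | add y z _ _ hy hz => rw [tmul_add]; exact Submodule.add_mem _ hy hz
      | smul a y _ hy => rw [tmul_smul]; exact Submodule.smul_mem _ a hy
  | zero => rw [zero_tmul]; exact Submodule.zero_mem _
  | add x z _ _ hx hz => rw [add_tmul]; exact Submodule.add_mem _ hx hz
  | smul a x _ hx => rw [← smul_tmul']; exact Submodule.smul_mem _ a hx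

lemma comp_append {α β : Type*} {p q : ℕ} (f : α → β) (a : Fin p → α) (c : Fin q → α) :
    (fun j => f (Fin.append a c j))
      = Fin.append (fun i => f (a i)) (fun i => f (c i)) := by
  funext j
  rw [append_apply, append_apply]
  split_ifs <;> rfl

lemma span_range_mono_eq_top (n : ℕ) (b : Module.Basis (Fin n) K E) (m : ℕ) :
    Submodule.span K (Set.range
      (fun d : Fin m → Fin n => PiTensorProduct.tprod K (fun k => b (d k)))) = ⊤ := by
  have hfun : (fun d : Fin m → Fin n => PiTensorProduct.tprod K (fun k => b (d k)))
      = ⇑(powBasis K E n b m) := by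
    funext d; rw [powBasis_apply]
  rw [hfun]
  exact (powBasis K E n b m).span_eq

lemma mem_span_mono_iff (n : ℕ) (b : Module.Basis (Fin n) K E) (m : ℕ)
    (S : Set (Fin m → Fin n)) (u : Fin m → Fin n) :
    PiTensorProduct.tprod K (fun k => b (u k)) ∈ Submodule.span K
      ((fun d : Fin m → Fin n => PiTensorProduct.tprod K (fun k => b (d k))) '' S)
      ↔ u ∈ S := by
  have hfun : (fun d : Fin m → Fin n => PiTensorProduct.tprod K (fun k => b (d k)))
      = ⇑(powBasis K E n b m) := by
    funext d; rw [powBasis_apply]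
  rw [hfun, show PiTensorProduct.tprod K (fun k => b (u k)) = powBasis K E n b m u from
    (powBasis_apply K E n b m u).symm]
  exact Module.Basis.self_mem_span_image _

lemma subRight_eq (n : ℕ) (b : Module.Basis (Fin n) K E) (N r : ℕ)
    (W : Set (Fin N → Fin n)) (R : Submodule K (⨂[K]^N E))
    (hmono : R = Submodule.span K
      ((fun d : Fin N → Fin n => PiTensorProduct.tprod K (fun k => b (d k))) '' W)) :
    subRight K E R r = Submodule.span K
      ((fun u : Fin (N + r) → Fin n => PiTensorProduct.tprod K (fun k => b (u k))) ''
        {u | ∃ d ∈ W, ∃ e, u = Fin.append d e}) := by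
  have hrT : LinearMap.range (LinearMap.rTensor (⨂[K]^r E) R.subtype)
      = Submodule.span K {t | ∃ (x : R) (y : ⨂[K]^r E), (x : ⨂[K]^N E) ⊗ₜ[K] y = t} := by
    rw [show (LinearMap.rTensor (⨂[K]^r E) R.subtype)
        = TensorProduct.map R.subtype LinearMap.id from rfl,
      TensorProduct.range_map_eq_span_tmul]
    congr 1
  rw [subRight, LinearMap.range_comp, hrT, Submodule.map_span]
  apply le_antisymm
  · rw [Submodule.span_le]
    rintro _ ⟨t, ⟨x, y, rfl⟩, rfl⟩
    have hx : (x : ⨂[K]^N E) ∈ Submodule.span K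
        ((fun d : Fin N → Fin n => PiTensorProduct.tprod K (fun k => b (d k))) '' W) := by
      rw [← hmono]; exact x.2
    have hy : y ∈ Submodule.span K (Set.range
        (fun e : Fin r → Fin n => PiTensorProduct.tprod K (fun k => b (e k)))) := by
      rw [span_range_mono_eq_top K E n b r]; trivial
    have ht := tmul_mem_span K hx hy
    have hmap : (TensorPower.mulEquiv (n := N) (m := r)).toLinearMap ((x : ⨂[K]^N E) ⊗ₜ[K] y)
        ∈ Submodule.map (TensorPower.mulEquiv (R := K) (n := N) (m := r)).toLinearMap
          (Submodule.span K (Set.image2 (· ⊗ₜ[K] ·)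
            ((fun d : Fin N → Fin n => PiTensorProduct.tprod K (fun k => b (d k))) '' W)
            (Set.range (fun e : Fin r → Fin n =>
              PiTensorProduct.tprod K (fun k => b (e k)))))) :=
      Submodule.mem_map_of_mem ht
    rw [Submodule.map_span] at hmap
    refine Submodule.span_mono ?_ hmap
    rintro _ ⟨_, ⟨_, ⟨d, hd, rfl⟩, _, ⟨e, rfl⟩, rfl⟩, rfl⟩
    refine ⟨Fin.append d e, ⟨d, hd, e, rfl⟩, ?_⟩
    rw [LinearEquiv.coe_toLinearMap, mulEquiv_tprod]
    exact congrArg (PiTensorProduct.tprod K) (comp_append b d e)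
  · rw [Submodule.span_le]
    rintro _ ⟨u, ⟨d, hd, e, rfl⟩, rfl⟩
    have hxR : PiTensorProduct.tprod K (fun k => b (d k)) ∈ R := by
      rw [hmono]; exact Submodule.subset_span ⟨d, hd, rfl⟩
    have hmem : ((⟨_, hxR⟩ : R) : ⨂[K]^N E) ⊗ₜ[K] PiTensorProduct.tprod K (fun k => b (e k))
        ∈ {t : (⨂[K]^N E) ⊗[K] ⨂[K]^r E |
            ∃ (x : R) (y : ⨂[K]^r E), (x : ⨂[K]^N E) ⊗ₜ[K] y = t} :=
      ⟨⟨_, hxR⟩, PiTensorProduct.tprod K (fun k => b (e k)), rfl⟩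
    have hin := Submodule.mem_map_of_mem
      (f := (TensorPower.mulEquiv (R := K) (n := N) (m := r)).toLinearMap)
      (Submodule.subset_span hmem)
    have heq : (TensorPower.mulEquiv (R := K) (n := N) (m := r)).toLinearMap
        (((⟨_, hxR⟩ : R) : ⨂[K]^N E) ⊗ₜ[K] PiTensorProduct.tprod K (fun k => b (e k)))
        = PiTensorProduct.tprod K (fun k => b (Fin.append d e k)) := by
      rw [LinearEquiv.coe_toLinearMap, mulEquiv_tprod]
      exact (congrArg (PiTensorProduct.tprod K) (comp_append b d e)).symm
    rw [heq, Submodule.map_span] at hin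
    exact hin

lemma cast_mul_tprod (N r : ℕ) (a : Fin r → E) (c : Fin N → E) :
    (TensorPower.cast K E (add_comm r N))
      (TensorPower.mulEquiv (R := K) (n := r) (m := N)
        (PiTensorProduct.tprod K a ⊗ₜ[K] PiTensorProduct.tprod K c))
      = PiTensorProduct.tprod K
          (fun j : Fin (N + r) => Fin.append a c (Fin.cast (add_comm N r) j)) := by
  rw [mulEquiv_tprod, TensorPower.cast_tprod]
  rfl

lemma subLeft_eq (n : ℕ) (b : Module.Basis (Fin n) K E) (N r : ℕ)
    (W : Set (Fin N → Fin n)) (R : Submodule K (⨂[K]^N E))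
    (hmono : R = Submodule.span K
      ((fun d : Fin N → Fin n => PiTensorProduct.tprod K (fun k => b (d k))) '' W)) :
    subLeft K E R r = Submodule.span K
      ((fun u : Fin (N + r) → Fin n => PiTensorProduct.tprod K (fun k => b (u k))) ''
        {u | ∃ d ∈ W, ∃ e : Fin r → Fin n,
          u = fun j => Fin.append e d (Fin.cast (add_comm N r) j)}) := by
  have hlT : LinearMap.range (LinearMap.lTensor (⨂[K]^r E) R.subtype)
      = Submodule.span K {t | ∃ (y : ⨂[K]^r E) (x : R), y ⊗ₜ[K] (x : ⨂[K]^N E) = t} := by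
    rw [show (LinearMap.lTensor (⨂[K]^r E) R.subtype)
        = TensorProduct.map LinearMap.id R.subtype from rfl,
      TensorProduct.range_map_eq_span_tmul]
    congr 1
  rw [subLeft, LinearMap.range_comp, LinearMap.range_comp, hlT,
    Submodule.map_span, Submodule.map_span]
  apply le_antisymm
  · rw [Submodule.span_le]
    rintro _ ⟨_, ⟨t, ⟨y, x, rfl⟩, rfl⟩, rfl⟩
    have hx : (x : ⨂[K]^N E) ∈ Submodule.span K
        ((fun d : Fin N → Fin n => PiTensorProduct.tprod K (fun k => b (d k))) '' W) := by
      rw [← hmono]; exact x.2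
    have hy : y ∈ Submodule.span K (Set.range
        (fun e : Fin r → Fin n => PiTensorProduct.tprod K (fun k => b (e k)))) := by
      rw [span_range_mono_eq_top K E n b r]; trivial
    have ht := tmul_mem_span K hy hx
    have hmap := Submodule.mem_map_of_mem
      (f := (TensorPower.mulEquiv (R := K) (n := r) (m := N)).toLinearMap) ht
    rw [Submodule.map_span] at hmap
    have hmap2 := Submodule.mem_map_of_mem
      (f := (TensorPower.cast K E (add_comm r N)).toLinearMap) hmap
    rw [Submodule.map_span] at hmap2
    refine Submodule.span_mono ?_ hmap2
    rintro _ ⟨_, ⟨_, ⟨_, ⟨e, rfl⟩, _, ⟨d, hd, rfl⟩, rfl⟩, rfl⟩, rfl⟩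
    refine ⟨fun j => Fin.append e d (Fin.cast (add_comm N r) j), ⟨d, hd, e, rfl⟩, ?_⟩
    simp only [LinearEquiv.coe_toLinearMap]
    rw [cast_mul_tprod]
    refine congrArg (PiTensorProduct.tprod K) ?_
    funext j
    exact congrFun (comp_append b e d) (Fin.cast (add_comm N r) j)
  · rw [Submodule.span_le]
    rintro _ ⟨u, ⟨d, hd, e, rfl⟩, rfl⟩
    have hxR : PiTensorProduct.tprod K (fun k => b (d k)) ∈ R := by
      rw [hmono]; exact Submodule.subset_span ⟨d, hd, rfl⟩
    have hmem : PiTensorProduct.tprod K (fun k => b (e k)) ⊗ₜ[K]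
          ((⟨_, hxR⟩ : R) : ⨂[K]^N E)
        ∈ {t : (⨂[K]^r E) ⊗[K] ⨂[K]^N E |
            ∃ (y : ⨂[K]^r E) (x : R), y ⊗ₜ[K] (x : ⨂[K]^N E) = t} :=
      ⟨PiTensorProduct.tprod K (fun k => b (e k)), ⟨_, hxR⟩, rfl⟩
    have hin := Submodule.mem_map_of_mem
      (f := (TensorPower.mulEquiv (R := K) (n := r) (m := N)).toLinearMap)
      (Submodule.subset_span hmem)
    rw [Submodule.map_span] at hin
    have hin2 := Submodule.mem_map_of_mem
      (f := (TensorPower.cast K E (add_comm r N)).toLinearMap) hin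
    rw [Submodule.map_span] at hin2
    have heq : (TensorPower.cast K E (add_comm r N)).toLinearMap
        ((TensorPower.mulEquiv (R := K) (n := r) (m := N)).toLinearMap
          (PiTensorProduct.tprod K (fun k => b (e k)) ⊗ₜ[K]
            ((⟨_, hxR⟩ : R) : ⨂[K]^N E)))
        = PiTensorProduct.tprod K
            (fun j => b (Fin.append e d (Fin.cast (add_comm N r) j))) := by
      simp only [LinearEquiv.coe_toLinearMap]
      rw [cast_mul_tprod]
      refine congrArg (PiTensorProduct.tprod K) ?_
      funext j
      exact (congrFun (comp_append b e d) (Fin.cast (add_comm N r) j)).symm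
    rw [heq] at hin2
    exact hin2

end Aux

/-- Let `K` be a field and `E` a finite-dimensional `K`-vector space with a
fixed basis `(x_1, …, x_n)`.  Let `N ≥ 1` and `r ≥ 1` be integers and let `R ⊆ E^⊗N` be a
subspace spanned by monomials `x_{i_1} ⊗ ⋯ ⊗ x_{i_N}` in the basis vectors.  If
`R ⊗ E^⊗r = E^⊗r ⊗ R` as subspaces of `E^⊗(N+r)`, then `R = 0` or `R = E^⊗N`. -/
theorem statement13 [FiniteDimensional K E] (n : ℕ) (b : Module.Basis (Fin n) K E)
    (N r : ℕ) (hN : 1 ≤ N) (hr : 1 ≤ r)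
    (R : Submodule K (⨂[K]^N E))
    (W : Set (Fin N → Fin n))
    (hmono : R = Submodule.span K
      ((fun d : Fin N → Fin n => PiTensorProduct.tprod K (fun k => b (d k))) '' W))
    (h : subRight K E R r = subLeft K E R r) :
    R = ⊥ ∨ R = ⊤ := by
  by_cases hWne : W.Nonempty
  · right
    -- From the hypothesis, every "prefix" word gives a "suffix" word.
    have hsub : ∀ u : Fin (N + r) → Fin n, (∃ d ∈ W, ∃ e, u = Fin.append d e) →
        (∃ d ∈ W, ∃ e : Fin r → Fin n,
          u = fun j => Fin.append e d (Fin.cast (add_comm N r) j)) := by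
      intro u hu
      have h1 : PiTensorProduct.tprod K (fun k => b (u k)) ∈ subRight K E R r := by
        rw [subRight_eq K E n b N r W R hmono]
        exact Submodule.subset_span ⟨u, hu, rfl⟩
      rw [h, subLeft_eq K E n b N r W R hmono] at h1
      exact (mem_span_mono_iff K E n b (N + r) _ u).1 h1
    -- the shift lemma
    have shift : ∀ w ∈ W, ∀ v : Fin N → Fin n,
        (∀ j : Fin N, (hj : (j : ℕ) + r < N) → v j = w ⟨(j : ℕ) + r, hj⟩) → v ∈ W := by
      intro w hw v hv
      obtain ⟨d', hd', e', hu⟩ := hsub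
        (Fin.append w (fun i : Fin r => v ⟨(i : ℕ) + N - r, by omega⟩))
        ⟨w, hw, _, rfl⟩
      have hveq : v = d' := by
        funext k
        have h1 : Fin.append w (fun i : Fin r => v ⟨(i : ℕ) + N - r, by omega⟩)
            ⟨r + (k : ℕ), by omega⟩ = d' k := by
          rw [congrFun hu ⟨r + (k : ℕ), by omega⟩, append_apply]
          simp only [Fin.coe_cast]
          rw [dif_neg (by omega)]
          congr 1
          ext
          simp
        have h2 : Fin.append w (fun i : Fin r => v ⟨(i : ℕ) + N - r, by omega⟩)
            ⟨r + (k : ℕ), by omega⟩ = v k := by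
          rw [append_apply]
          by_cases hcase : r + (k : ℕ) < N
          · rw [dif_pos (by simpa using hcase)]
            rw [hv k (by omega)]
            congr 1
            ext
            simp
            omega
          · rw [dif_neg (by simpa using hcase)]
            show v ⟨(r + (k : ℕ) - N) + N - r, by omega⟩ = v k
            congr 1
            ext
            simp
            omega
        exact h2.symm.trans h1
      rw [hveq]; exact hd'
    -- iterated shifting
    have main : ∀ m t : ℕ, m * r = t → ∀ v w : Fin N → Fin n, w ∈ W →
        (∀ k : Fin N, (hk : (k : ℕ) + t < N) → v k = w ⟨(k : ℕ) + t, hk⟩) → v ∈ W := by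
      intro m
      induction m with
      | zero =>
        intro t ht v w hw hv
        have : v = w := by
          funext k
          rw [hv k (by omega)]
          congr 1
          ext
          simp
          omega
        rw [this]; exact hw
      | succ m ih =>
        intro t ht v w hw hv
        have htt : t = m * r + r := by rw [← ht, Nat.succ_mul]
        subst htt
        set v₁ : Fin N → Fin n := fun j =>
          if hj : (j : ℕ) + r < N then w ⟨(j : ℕ) + r, hj⟩
          else v ⟨(j : ℕ) - m * r, by omega⟩ with hv₁
        have hv₁W : v₁ ∈ W := by
          refine shift w hw v₁ (fun j hj => ?_)
          simp only [hv₁]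
          rw [dif_pos hj]
        refine ih (m * r) rfl v v₁ hv₁W (fun k hk => ?_)
        simp only [hv₁]
        by_cases hc : ((k : ℕ) + m * r) + r < N
        · rw [dif_pos (by simpa using hc)]
          rw [hv k (by omega)]
          congr 1
          ext
          simp
          omega
        · rw [dif_neg (by simpa using hc)]
          congr 1
          ext
          simp
    -- every word is in W
    obtain ⟨w₀, hw₀⟩ := hWne
    have hNr : N ≤ N * r := Nat.le_mul_of_pos_right N hr
    have hall : ∀ v : Fin N → Fin n, v ∈ W := fun v =>
      main N (N * r) rfl v w₀ hw₀ (fun k hk => absurd hk (by omega))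
    have hWuniv : W = Set.univ := Set.eq_univ_of_forall hall
    rw [hmono, hWuniv, Set.image_univ, ← top_le_iff, ← span_range_mono_eq_top K E n b N]
  · left
    rw [Set.not_nonempty_iff_eq_empty] at hWne
    rw [hmono, hWne, Set.image_empty, Submodule.span_empty]
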